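/- There exists a universal constant c > 0 (one may take c = 1/25600) such that for every even integer s ≥ 16 and every integer n ≥ s, in the outlier-free categorical model the minimax Euclidean risk satisfies: inf over all measurable estimators θ̄_n : {e_1,…,e_s}^n → Δ^{s-1} of sup over θ ∈ Δ^{s-1} of E_θ[d_{L2}(θ̄_n(X_1,…,X_n), θ)] ≥ c (1/n)^{1/2}, where under E_θ the observations X_1,…,X_n are i.i.d. with P(X_i = e_j) = θ_j for j = 1,…,s. -/

import Mathlib

open MeasureTheory ProbabilityTheory

noncomputable section

/-- The probability simplex `Δ^{s-1}` in `ℝ^s`. -/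
def simplex (s : ℕ) : Set (Fin s → ℝ) :=
  {v | (∀ j, 0 ≤ v j) ∧ ∑ j, v j = 1}

/-- Euclidean (`L²`) distance between two points of the simplex. -/
def dL2 {s : ℕ} (u v : Fin s → ℝ) : ℝ := Real.sqrt (∑ j, (u j - v j) ^ 2)

/-- The `j`-th canonical basis vector of `ℝ^s`. -/
def basisVec (s : ℕ) (j : Fin s) : Fin s → ℝ := fun i => if i = j then 1 else 0

/-- The categorical distribution on `{e_1, …, e_s}` with weights `θ`. -/
def catMeasure (s : ℕ) (θ : Fin s → ℝ) : Measure (Fin s → ℝ) :=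
  ∑ j : Fin s, ENNReal.ofReal (θ j) • Measure.dirac (basisVec s j)

/-!
Le Cam's two-point method. Let `θ₀, θ₁` put masses `1/2 ± δ` and `1/2 ∓ δ` on two categories,
with `δ = √(1/n)/4`. They are `2δ` apart, so by the triangle inequality any estimator has risk
at least `δ · ∑ min(P₀ⁿ, P₁ⁿ)` under one of them. The Bhattacharyya coefficient
`ρ = ∑ √p √q` of `θ₀, θ₁` is `√(1 - 4δ²)`, and it is multiplicative over products, so for the
`n`-sample laws `ρ² = (1 - 4δ²)ⁿ ≥ 3/4` by Bernoulli. Cauchy–Schwarz bounds the total variation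
`∑ |p - q|` by `2√(1 - ρ²) ≤ 1`, so the overlap is at least `1/2` and the risk at least
`δ/2 = √(1/n)/8`.
-/

open Finset

instance {α : Type*} [MeasurableSpace α] (x : ℝ) (μ : Measure α) [IsFiniteMeasure μ] :
    IsFiniteMeasure (ENNReal.ofReal x • μ) :=
  ⟨by simp [ENNReal.mul_lt_top]⟩

lemma catMeasure_eq_map (s : ℕ) (θ : Fin s → ℝ) :
    catMeasure s θ = (∑ j, ENNReal.ofReal (θ j) • Measure.dirac j).map (basisVec s) := by
  ext A hA
  rw [Measure.map_apply (measurable_of_countable _) hA, catMeasure, Measure.finsetSum_apply,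
    Measure.finsetSum_apply]
  refine sum_congr rfl fun j _ => ?_
  by_cases hj : basisVec s j ∈ A <;> simp [hj]

lemma integral_pi_catMeasure {s n : ℕ} {θ : Fin s → ℝ} (hθ : ∀ j, 0 ≤ θ j)
    {f : (Fin n → Fin s → ℝ) → ℝ} (hf : Measurable f) :
    ∫ x, f x ∂(Measure.pi fun _ : Fin n => catMeasure s θ)
      = ∑ ω : Fin n → Fin s, (∏ i, θ (ω i)) * f (fun i => basisVec s (ω i)) := by
  simp_rw [catMeasure_eq_map]
  rw [← Measure.pi_map_pi fun _ => (measurable_of_countable _).aemeasurable,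
    integral_map (measurable_of_countable _).aemeasurable hf.aestronglyMeasurable,
    integral_fintype .of_finite]
  refine sum_congr rfl fun ω _ => ?_
  simp [measureReal_def, ENNReal.toReal_prod, Measure.finsetSum_apply, Pi.single_apply, hθ]

section Overlap

variable {Ω : Type*} [Fintype Ω]

lemma sum_abs_sub_sq_le (p q : Ω → ℝ) (hp : ∀ ω, 0 ≤ p ω) (hq : ∀ ω, 0 ≤ q ω) :
    (∑ ω, |p ω - q ω|) ^ 2
      ≤ (∑ ω, p ω + ∑ ω, q ω) ^ 2 - 4 * (∑ ω, √(p ω) * √(q ω)) ^ 2 := by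
  have hfactor : ∀ ω, |p ω - q ω| = |√(p ω) - √(q ω)| * (√(p ω) + √(q ω)) := fun ω => by
    rw [← abs_of_nonneg (by positivity : 0 ≤ √(p ω) + √(q ω)), ← abs_mul]
    congr 1
    linear_combination -Real.sq_sqrt (hp ω) + Real.sq_sqrt (hq ω)
  have hminus : ∑ ω, |√(p ω) - √(q ω)| ^ 2
      = ∑ ω, p ω + ∑ ω, q ω - 2 * ∑ ω, √(p ω) * √(q ω) := by
    simp only [sq_abs, sub_sq, Real.sq_sqrt (hp _), Real.sq_sqrt (hq _), sum_add_distrib,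
      sum_sub_distrib, mul_sum, mul_assoc]
    ring
  have hplus : ∑ ω, (√(p ω) + √(q ω)) ^ 2
      = ∑ ω, p ω + ∑ ω, q ω + 2 * ∑ ω, √(p ω) * √(q ω) := by
    simp only [add_sq, Real.sq_sqrt (hp _), Real.sq_sqrt (hq _), sum_add_distrib, mul_sum,
      mul_assoc]
    ring
  calc (∑ ω, |p ω - q ω|) ^ 2
      ≤ (∑ ω, |√(p ω) - √(q ω)| ^ 2) * ∑ ω, (√(p ω) + √(q ω)) ^ 2 := by
        simp only [hfactor]; exact sum_mul_sq_le_sq_mul_sq _ _ _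
    _ = _ := by rw [hminus, hplus]; ring

lemma one_sub_sqrt_le_sum_min (p q : Ω → ℝ) (hp : ∀ ω, 0 ≤ p ω) (hq : ∀ ω, 0 ≤ q ω)
    (hp1 : ∑ ω, p ω = 1) (hq1 : ∑ ω, q ω = 1) :
    1 - √(1 - (∑ ω, √(p ω) * √(q ω)) ^ 2) ≤ ∑ ω, min (p ω) (q ω) := by
  have hmin : ∀ ω, min (p ω) (q ω) = (p ω + q ω - |p ω - q ω|) / 2 := fun ω => by
    rcases le_total (p ω) (q ω) with h | h
    · rw [min_eq_left h, abs_of_nonpos (sub_nonpos.2 h)]; ring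
    · rw [min_eq_right h, abs_of_nonneg (sub_nonneg.2 h)]; ring
  have htv : (∑ ω, |p ω - q ω|) / 2 ≤ √(1 - (∑ ω, √(p ω) * √(q ω)) ^ 2) := by
    refine (le_abs_self _).trans (Real.abs_le_sqrt ?_)
    have := sum_abs_sub_sq_le p q hp hq
    rw [hp1, hq1] at this
    linarith
  simp only [hmin, ← sum_div, sum_sub_distrib, sum_add_distrib, hp1, hq1]
  linarith

end Overlap

lemma sum_sqrt_prod_mul_sqrt_prod {κ : Type*} [Fintype κ] (p q : κ → ℝ)
    (hp : ∀ j, 0 ≤ p j) (hq : ∀ j, 0 ≤ q j) (n : ℕ) :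
    ∑ ω : Fin n → κ, √(∏ i, p (ω i)) * √(∏ i, q (ω i)) = (∑ j, √(p j) * √(q j)) ^ n := by
  rw [Fintype.sum_pow]
  refine sum_congr rfl fun ω _ => ?_
  rw [Real.sqrt_prod _ fun i _ => hp _, Real.sqrt_prod _ fun i _ => hq _, prod_mul_distrib]

lemma le_cam_two_point {Ω : Type*} [Fintype Ω] {p q L₀ L₁ : Ω → ℝ}
    (hp : ∀ ω, 0 ≤ p ω) (hq : ∀ ω, 0 ≤ q ω) (hL₀ : ∀ ω, 0 ≤ L₀ ω) (hL₁ : ∀ ω, 0 ≤ L₁ ω)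
    {Δ : ℝ} (hsep : ∀ ω, Δ ≤ L₀ ω + L₁ ω) :
    Δ * ∑ ω, min (p ω) (q ω) ≤ ∑ ω, p ω * L₀ ω + ∑ ω, q ω * L₁ ω := by
  rw [mul_sum, ← sum_add_distrib]
  refine sum_le_sum fun ω _ => ?_
  have hm : 0 ≤ min (p ω) (q ω) := le_min (hp ω) (hq ω)
  calc Δ * min (p ω) (q ω) ≤ (L₀ ω + L₁ ω) * min (p ω) (q ω) := by gcongr; exact hsep ω
    _ = min (p ω) (q ω) * L₀ ω + min (p ω) (q ω) * L₁ ω := by ring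
    _ ≤ p ω * L₀ ω + q ω * L₁ ω := by
      gcongr
      exacts [hL₀ ω, min_le_left _ _, hL₁ ω, min_le_right _ _]

lemma dL2_eq_dist {s : ℕ} (u v : Fin s → ℝ) :
    dL2 u v = dist (WithLp.toLp 2 u) (WithLp.toLp 2 v) := by
  simp [dL2, EuclideanSpace.dist_eq, Real.dist_eq, sq_abs]

def twoPoint {s : ℕ} (j₀ j₁ : Fin s) (δ : ℝ) : Fin s → ℝ :=
  Pi.single j₀ (1 / 2 + δ) + Pi.single j₁ (1 / 2 - δ)

section TwoPoint

variable {s : ℕ} {j₀ j₁ : Fin s} {δ : ℝ}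

lemma twoPoint_mem_simplex (hδ : |δ| ≤ 1 / 2) : twoPoint j₀ j₁ δ ∈ simplex s := by
  obtain ⟨hδ₀, hδ₁⟩ := abs_le.1 hδ
  refine ⟨fun j => ?_, ?_⟩
  · simp only [twoPoint, Pi.add_apply, Pi.single_apply]
    split_ifs <;> linarith
  · simp only [twoPoint, Pi.add_apply, sum_add_distrib, sum_pi_single', mem_univ, if_true]
    ring

lemma sum_sqrt_twoPoint_mul_sqrt_twoPoint_swap (hj : j₀ ≠ j₁) (hδ : |δ| ≤ 1 / 2) :
    ∑ j, √(twoPoint j₀ j₁ δ j) * √(twoPoint j₁ j₀ δ j) = √(1 - 4 * δ ^ 2) := by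
  rw [Fintype.sum_eq_add j₀ j₁ hj fun j hj' => by simp [twoPoint, hj'.1, hj'.2]]
  simp only [twoPoint, Pi.add_apply, Pi.single_eq_same, Pi.single_eq_of_ne hj,
    Pi.single_eq_of_ne hj.symm, add_zero, zero_add]
  have h₀ : 0 ≤ 1 / 2 + δ := by linarith [(abs_le.1 hδ).1]
  rw [mul_comm (√(1 / 2 - δ)), ← two_mul, ← Real.sqrt_mul h₀,
    show (1 : ℝ) - 4 * δ ^ 2 = 2 ^ 2 * ((1 / 2 + δ) * (1 / 2 - δ)) by ring,
    Real.sqrt_mul (sq_nonneg 2), Real.sqrt_sq zero_le_two]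

lemma two_mul_le_dL2_twoPoint_swap (hj : j₀ ≠ j₁) :
    2 * δ ≤ dL2 (twoPoint j₀ j₁ δ) (twoPoint j₁ j₀ δ) := by
  refine (le_abs_self _).trans (Real.abs_le_sqrt ?_)
  refine le_of_eq_of_le ?_ (single_le_sum (fun j _ => sq_nonneg _) (mem_univ j₀))
  simp only [twoPoint, Pi.add_apply, Pi.single_eq_same, Pi.single_eq_of_ne hj, add_zero, zero_add]
  ring

end TwoPoint

lemma one_half_le_sum_min_prod_twoPoint {s n : ℕ} {j₀ j₁ : Fin s} (hj : j₀ ≠ j₁) {δ : ℝ}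
    (hδ : |δ| ≤ 1 / 2) (hnδ : 16 * n * δ ^ 2 ≤ 1) :
    1 / 2 ≤ ∑ ω : Fin n → Fin s,
      min (∏ i, twoPoint j₀ j₁ δ (ω i)) (∏ i, twoPoint j₁ j₀ δ (ω i)) := by
  have h₀ := twoPoint_mem_simplex (j₀ := j₀) (j₁ := j₁) hδ
  have h₁ := twoPoint_mem_simplex (j₀ := j₁) (j₁ := j₀) hδ
  have hδ₂ : 4 * δ ^ 2 ≤ 1 := by nlinarith [abs_le.1 hδ]
  have hbern : 3 / 4 ≤ (1 - 4 * δ ^ 2) ^ n := by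
    have := one_add_mul_le_pow (by linarith : -2 ≤ -(4 * δ ^ 2)) n
    rw [← sub_eq_add_neg] at this
    linarith
  have hbc : (∑ ω : Fin n → Fin s, √(∏ i, twoPoint j₀ j₁ δ (ω i))
      * √(∏ i, twoPoint j₁ j₀ δ (ω i))) ^ 2 = (1 - 4 * δ ^ 2) ^ n := by
    rw [sum_sqrt_prod_mul_sqrt_prod _ _ h₀.1 h₁.1, sum_sqrt_twoPoint_mul_sqrt_twoPoint_swap hj hδ,
      pow_right_comm, Real.sq_sqrt (by linarith)]
  calc (1 : ℝ) / 2 = 1 - √(1 - 3 / 4) := by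
        rw [show (1 : ℝ) - 3 / 4 = (1 / 2) ^ 2 by norm_num, Real.sqrt_sq (by norm_num)]; norm_num
    _ ≤ 1 - √(1 - (1 - 4 * δ ^ 2) ^ n) := by gcongr
    _ ≤ _ := by
      rw [← hbc]
      refine one_sub_sqrt_le_sum_min _ _ (fun ω => prod_nonneg fun i _ => h₀.1 _)
        (fun ω => prod_nonneg fun i _ => h₁.1 _) ?_ ?_
      · rw [← Fintype.sum_pow, h₀.2, one_pow]
      · rw [← Fintype.sum_pow, h₁.2, one_pow]

theorem div_two_le_of_forall_risk_le {s n : ℕ} {j₀ j₁ : Fin s} (hj : j₀ ≠ j₁) {δ : ℝ}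
    (hδ₀ : 0 ≤ δ) (hδ : δ ≤ 1 / 2) (hnδ : 16 * n * δ ^ 2 ≤ 1)
    (est : (Fin n → Fin s → ℝ) → Fin s → ℝ) (hest : Measurable est) {b : ℝ}
    (hb : ∀ θ ∈ simplex s,
      ∫ x, dL2 (est x) θ ∂(Measure.pi fun _ : Fin n => catMeasure s θ) ≤ b) :
    δ / 2 ≤ b := by
  have hδ' : |δ| ≤ 1 / 2 := abs_le.2 ⟨by linarith, hδ⟩
  set θ₀ := twoPoint j₀ j₁ δ
  set θ₁ := twoPoint j₁ j₀ δ
  have h₀ : θ₀ ∈ simplex s := twoPoint_mem_simplex hδ'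
  have h₁ : θ₁ ∈ simplex s := twoPoint_mem_simplex hδ'
  set E : (Fin n → Fin s) → Fin n → Fin s → ℝ := fun ω i => basisVec s (ω i)
  have hrisk : ∀ θ ∈ simplex s, ∑ ω, (∏ i, θ (ω i)) * dL2 (est (E ω)) θ ≤ b := fun θ hθ => by
    have := hb θ hθ
    rwa [integral_pi_catMeasure hθ.1 (by unfold dL2; fun_prop)] at this
  have hsep : ∀ x, 2 * δ ≤ dL2 (est x) θ₀ + dL2 (est x) θ₁ := fun x =>
    (two_mul_le_dL2_twoPoint_swap hj).trans <| by
      simp only [dL2_eq_dist]; exact dist_triangle_left _ _ _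
  have hlecam := le_cam_two_point (p := fun ω => ∏ i, θ₀ (ω i)) (q := fun ω => ∏ i, θ₁ (ω i))
    (L₀ := fun ω => dL2 (est (E ω)) θ₀) (L₁ := fun ω => dL2 (est (E ω)) θ₁)
    (fun ω => prod_nonneg fun i _ => h₀.1 (ω i)) (fun ω => prod_nonneg fun i _ => h₁.1 (ω i))
    (fun ω => Real.sqrt_nonneg _) (fun ω => Real.sqrt_nonneg _) fun ω => hsep (E ω)
  have hoverlap := one_half_le_sum_min_prod_twoPoint (n := n) hj hδ' hnδ
  nlinarith [hrisk θ₀ h₀, hrisk θ₁ h₁]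

/-- Minimax lower bound `c·(1/n)^{1/2}` in Euclidean distance for the outlier-free
categorical model: any uniform upper bound `b` on the risk of an estimator is at
least `c·(1/n)^{1/2}`. -/
theorem minimax_lower_bound_L2_outlier_free :
    ∃ c : ℝ, 0 < c ∧ ∀ s n : ℕ, Even s → 16 ≤ s → s ≤ n →
      ∀ est : (Fin n → Fin s → ℝ) → Fin s → ℝ, Measurable est →
        (∀ x, est x ∈ simplex s) →
        ∀ b : ℝ,
          (∀ θ : Fin s → ℝ, θ ∈ simplex s →
            ∫ x, dL2 (est x) θ ∂(Measure.pi fun _ : Fin n => catMeasure s θ) ≤ b) →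
          c * Real.sqrt (1 / n) ≤ b := by
  refine ⟨1 / 8, by norm_num, fun s n _ hs _ est hest _ b hb => ?_⟩
  have hinv : (1 : ℝ) / n ≤ 1 := by simpa using Nat.cast_inv_le_one n
  have hδ : √(1 / n) / 4 ≤ 1 / 2 := by linarith [Real.sqrt_le_one.2 hinv]
  have hnδ : 16 * n * (√(1 / n) / 4) ^ 2 ≤ 1 := by
    calc _ = (n : ℝ) * (n : ℝ)⁻¹ := by rw [div_pow, Real.sq_sqrt (by positivity)]; ring
      _ ≤ 1 := mul_inv_le_one
  have := div_two_le_of_forall_risk_le (j₀ := ⟨0, by omega⟩) (j₁ := ⟨1, by omega⟩)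
    (by simp [Fin.ext_iff]) (by positivity) hδ hnδ est hest hb
  linarith
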